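/- arXiv:2105.00016 — 8 statements merged into one kernel-verified Lean document; each statement's English description precedes it below -/
import Mathlib

section
/- Let K be an algebraically closed field and V a finite-dimensional K-vector space. For a symmetric matrix A ∈ S²(V) (symmetric bilinear form), the minimal number k of rank-one symmetric summands needed to write A as a sum of terms of the form c(u⊗v + v⊗u) equals ⌈rk(A)/2⌉. -/
/-!
Over a field of characteristic `≠ 2`, a nonzero symmetric matrix `A` has an anisotropic vector
`x`, and subtracting `(xᵀ A x)⁻¹ (A x)(A x)ᵀ` lowers the rank: the kernel grows from `ker A` to
contain `x` as well. Peeling off two such rank-one squares at a time, and using square roots in the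
algebraically closed field to write `c₁ w₁ w₁ᵀ + c₂ w₂ w₂ᵀ = ½ (p qᵀ + q pᵀ)` with
`p, q = √c₁ w₁ ± √-1 √c₂ w₂`, gives `⌈rank A / 2⌉` summands. Conversely each summand
`c (u vᵀ + v uᵀ)` has rank at most `2`.
-/

open Matrix

namespace Matrix

variable {K : Type*} [Field K] {l m : Type*}

def IsSumOfSymmProducts (A : Matrix m m K) (k : ℕ) : Prop :=
  ∃ (c : Fin k → K) (u v : Fin k → m → K),
    A = ∑ i, c i • (vecMulVec (u i) (v i) + vecMulVec (v i) (u i))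

theorem isSumOfSymmProducts_zero (k : ℕ) : IsSumOfSymmProducts (0 : Matrix m m K) k :=
  ⟨0, 0, 0, by simp⟩

theorem IsSumOfSymmProducts.add {A B : Matrix m m K} {j k : ℕ} (hA : IsSumOfSymmProducts A j)
    (hB : IsSumOfSymmProducts B k) : IsSumOfSymmProducts (A + B) (j + k) := by
  obtain ⟨c, u, v, rfl⟩ := hA
  obtain ⟨d, u', v', rfl⟩ := hB
  refine ⟨Fin.append c d, Fin.append u u', Fin.append v v', ?_⟩
  simp [Fin.sum_univ_add]

theorem IsSumOfSymmProducts.mono {A : Matrix m m K} {j k : ℕ} (h : IsSumOfSymmProducts A j)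
    (hjk : j ≤ k) : IsSumOfSymmProducts A k := by
  obtain ⟨d, rfl⟩ := Nat.exists_eq_add_of_le hjk
  simpa using h.add (isSumOfSymmProducts_zero d)

theorem isSumOfSymmProducts_one_of_smul_vecMulVec_self_add [IsAlgClosed K] [NeZero (2 : K)]
    (c₁ c₂ : K) (w₁ w₂ : m → K) :
    IsSumOfSymmProducts (c₁ • vecMulVec w₁ w₁ + c₂ • vecMulVec w₂ w₂) 1 := by
  obtain ⟨α, hα⟩ := IsAlgClosed.exists_pow_nat_eq c₁ two_pos
  obtain ⟨β, hβ⟩ := IsAlgClosed.exists_pow_nat_eq c₂ two_pos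
  obtain ⟨ι, hι⟩ := IsAlgClosed.exists_pow_nat_eq (-1 : K) two_pos
  refine ⟨fun _ => 2⁻¹, fun _ => α • w₁ + (ι * β) • w₂, fun _ => α • w₁ - (ι * β) • w₂, ?_⟩
  rw [Fin.sum_univ_one, eq_inv_smul_iff₀ two_ne_zero]
  ext i j
  simp only [smul_apply, add_apply, vecMulVec_apply, Pi.add_apply, Pi.sub_apply,
    Pi.smul_apply, smul_eq_mul]
  linear_combination (2 * β ^ 2 * w₂ i * w₂ j) * hι - (2 * w₁ i * w₁ j) * hα
    - (2 * w₂ i * w₂ j) * hβ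

variable [Fintype m]

theorem rank_eq_zero_iff {A : Matrix l m K} : A.rank = 0 ↔ A = 0 := by
  classical
  rw [rank, Submodule.finrank_eq_zero, LinearMap.range_eq_bot, ← toLin'_apply',
    LinearEquiv.map_eq_zero_iff]

theorem rank_add_le (A B : Matrix l m K) : (A + B).rank ≤ A.rank + B.rank := by
  have h : LinearMap.range (A + B).mulVecLin ≤
      LinearMap.range A.mulVecLin ⊔ LinearMap.range B.mulVecLin := by
    rw [mulVecLin_add]
    exact LinearMap.range_add_le _ _
  exact (Submodule.finrank_mono h).trans (Submodule.finrank_add_le_finrank_add_finrank _ _)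

theorem rank_lt_rank_of_ker_lt {A B : Matrix l m K}
    (h : LinearMap.ker A.mulVecLin < LinearMap.ker B.mulVecLin) : B.rank < A.rank := by
  have hker := Submodule.finrank_lt_finrank_of_lt h
  have hA := LinearMap.finrank_range_add_finrank_ker A.mulVecLin
  have hB := LinearMap.finrank_range_add_finrank_ker B.mulVecLin
  unfold rank
  omega

theorem rank_smul_vecMulVec_add_vecMulVec_le (c : K) (u v : m → K) :
    (c • (vecMulVec u v + vecMulVec v u)).rank ≤ 2 := by
  rw [smul_add, ← smul_vecMulVec, ← smul_vecMulVec]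
  exact (rank_add_le _ _).trans (add_le_add (rank_vecMulVec_le _ _) (rank_vecMulVec_le _ _))

theorem IsSumOfSymmProducts.rank_le {A : Matrix m m K} {k : ℕ} (h : IsSumOfSymmProducts A k) :
    A.rank ≤ 2 * k := by
  obtain ⟨c, u, v, rfl⟩ := h
  calc (∑ i, c i • (vecMulVec (u i) (v i) + vecMulVec (v i) (u i))).rank
      ≤ ∑ i, (c i • (vecMulVec (u i) (v i) + vecMulVec (v i) (u i))).rank :=
        Finset.le_sum_of_subadditive (rank : Matrix m m K → ℕ) rank_zero.le rank_add_le _ _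
    _ ≤ ∑ _i : Fin k, 2 := Finset.sum_le_sum fun i _ => rank_smul_vecMulVec_add_vecMulVec_le _ _ _
    _ = 2 * k := by simp [mul_comm]

theorem IsSymm.exists_dotProduct_mulVec_self_ne_zero [NeZero (2 : K)] {A : Matrix m m K}
    (hA : A.IsSymm) (h : A ≠ 0) : ∃ x, x ⬝ᵥ A *ᵥ x ≠ 0 := by
  classical
  have : Invertible (2 : K) := invertibleOfNonzero two_ne_zero
  obtain ⟨x, hx⟩ := LinearMap.BilinForm.exists_bilinForm_self_ne_zero
    ((LinearEquiv.map_ne_zero_iff toBilin').mpr h)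
    (LinearMap.BilinForm.isSymm_iff.mp (isSymm_toBilin'_iff_isSymm.mpr hA))
  exact ⟨x, by rwa [toBilin'_apply'] at hx⟩

theorem IsSymm.rank_sub_smul_vecMulVec_mulVec_lt {A : Matrix m m K} (hA : A.IsSymm)
    {x : m → K} (hx : x ⬝ᵥ A *ᵥ x ≠ 0) :
    (A - (x ⬝ᵥ A *ᵥ x)⁻¹ • vecMulVec (A *ᵥ x) (A *ᵥ x)).rank < A.rank := by
  set w := A *ᵥ x
  set B := A - (x ⬝ᵥ w)⁻¹ • vecMulVec w w
  have hB : ∀ y, B *ᵥ y = A *ᵥ y - ((x ⬝ᵥ w)⁻¹ * (w ⬝ᵥ y)) • w := fun y => by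
    rw [sub_mulVec, smul_mulVec, vecMulVec_mulVec, op_smul_eq_smul, smul_smul]
  have hw : ∀ y, w ⬝ᵥ y = x ⬝ᵥ A *ᵥ y := fun y => by
    rw [dotProduct_comm, ← vecMul_transpose, hA.eq, dotProduct_mulVec, dotProduct_comm]
  apply rank_lt_rank_of_ker_lt
  refine SetLike.lt_iff_le_and_exists.mpr ⟨fun y hy => ?_, x, ?_, ?_⟩
  · simp only [LinearMap.mem_ker, mulVecLin_apply] at hy ⊢
    rw [hB, hw, hy, dotProduct_zero, mul_zero, zero_smul, sub_zero]
  · simp only [LinearMap.mem_ker, mulVecLin_apply]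
    rw [hB, dotProduct_comm w, inv_mul_cancel₀ hx, one_smul, sub_self]
  · simp only [LinearMap.mem_ker, mulVecLin_apply]
    exact fun h0 : w = 0 => hx (by rw [h0, dotProduct_zero])

theorem IsSymm.exists_eq_smul_vecMulVec_self_add [NeZero (2 : K)] {A : Matrix m m K}
    (hA : A.IsSymm) : ∃ (c : K) (w : m → K) (B : Matrix m m K),
      B.IsSymm ∧ A = c • vecMulVec w w + B ∧ B.rank ≤ A.rank - 1 := by
  by_cases h0 : A = 0
  · exact ⟨0, 0, 0, isSymm_zero, by simp [h0], by simp⟩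
  obtain ⟨x, hx⟩ := hA.exists_dotProduct_mulVec_self_ne_zero h0
  refine ⟨(x ⬝ᵥ A *ᵥ x)⁻¹, A *ᵥ x, _, hA.sub (IsSymm.smul (transpose_vecMulVec _ _) _),
    (add_sub_cancel _ _).symm, ?_⟩
  have := hA.rank_sub_smul_vecMulVec_mulVec_lt hx
  omega

theorem IsSymm.isSumOfSymmProducts_of_rank_le [IsAlgClosed K] [NeZero (2 : K)] {k : ℕ}
    {A : Matrix m m K} (hA : A.IsSymm) (hk : A.rank ≤ 2 * k) : IsSumOfSymmProducts A k := by
  induction k generalizing A with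
  | zero => exact rank_eq_zero_iff.mp (Nat.le_zero.mp hk) ▸ isSumOfSymmProducts_zero 0
  | succ k ih =>
    obtain ⟨c₁, w₁, B, hB, rfl, hBA⟩ := hA.exists_eq_smul_vecMulVec_self_add
    obtain ⟨c₂, w₂, C, hC, rfl, hCB⟩ := hB.exists_eq_smul_vecMulVec_self_add
    rw [← add_assoc, add_comm k]
    exact (isSumOfSymmProducts_one_of_smul_vecMulVec_self_add c₁ c₂ w₁ w₂).add
      (ih hC (by omega))

end Matrix

/-- The strength of a symmetric matrix `A` (minimal number of summands of the form
`c • (u ⊗ v + v ⊗ u)`) equals `⌈rank A / 2⌉`. -/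
theorem stmt0 (K : Type*) [Field K] [IsAlgClosed K] [CharZero K]
    (n : ℕ) (A : Matrix (Fin n) (Fin n) K) (hA : A.IsSymm) :
    IsLeast {k : ℕ | ∃ (c : Fin k → K) (u v : Fin k → (Fin n → K)),
        A = ∑ i, c i • (vecMulVec (u i) (v i) + vecMulVec (v i) (u i))}
      ((A.rank + 1) / 2) :=
  ⟨hA.isSumOfSymmProducts_of_rank_le (by omega),
    fun k hk => by have := IsSumOfSymmProducts.rank_le hk; omega⟩
end

section
/- Let K be an algebraically closed field of characteristic 0 with x ∈ K, and let A = [[1,x],[0,1]] ∈ K^{2×2}. Then A can be written in the form a u⊗v + b v⊗u for some a,b ∈ K and u,v ∈ K² if and only if x ≠ 2 and x ≠ −2. In particular, A has strength 2 when x = ±2 and strength 1 otherwise. -/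
open Matrix
open scoped Classical

private lemma strength_one_iff (K : Type*) [Field K] [IsAlgClosed K] [CharZero K] (x : K) :
    (∃ (a b : K) (u v : Fin 2 → K),
        !![(1 : K), x; 0, 1] = a • vecMulVec u v + b • vecMulVec v u) ↔ (x ≠ 2 ∧ x ≠ -2) := by
  constructor
  · rintro ⟨a, b, u, v, h⟩
    have h00 := congrFun (congrFun h 0) 0
    have h01 := congrFun (congrFun h 0) 1
    have h10 := congrFun (congrFun h 1) 0
    have h11 := congrFun (congrFun h 1) 1
    simp [vecMulVec_apply, Matrix.add_apply, Matrix.smul_apply, smul_eq_mul] at h00 h01 h10 h11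
    have key : x ^ 2 ≠ 4 := by
      intro hx4
      have hdet : -(a*b) * (u 0 * v 1 - u 1 * v 0)^2 = 1 := by
        linear_combination (-(a * (u 1 * v 1) + b * (v 1 * u 1))) * h00 - h11
          + (a * (u 1 * v 0) + b * (v 1 * u 0)) * h01 + x * h10
      have hsq : ((a+b)*(u 0*v 1 - u 1*v 0))^2 = 0 := by
        linear_combination ((a-b)*(u 0*v 1 - u 1*v 0) + x) * (h10 - h01) - 4*hdet + hx4
      have h0 : (a+b)*(u 0*v 1 - u 1*v 0) = 0 := by
        exact pow_eq_zero_iff two_ne_zero |>.mp hsq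
      rcases mul_eq_zero.1 h0 with hab | hd
      · have h2 : (2:K) = 0 := by
          linear_combination h00 + h11 + (u 0*v 0 + u 1*v 1) * hab
        exact two_ne_zero h2
      · have h1 : (0:K) = 1 := by
          linear_combination hdet + (a*b*(u 0*v 1 - u 1*v 0)) * hd
        exact zero_ne_one h1
    constructor
    · intro hx; exact key (by rw [hx]; norm_num)
    · intro hx; exact key (by rw [hx]; norm_num)
  · rintro ⟨hx2, hx2'⟩
    obtain ⟨r, hr⟩ := IsAlgClosed.exists_pow_nat_eq (x^2 - 4) (n := 2) (by norm_num)
    have hr0 : r ≠ 0 := by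
      intro h0
      apply hx2'
      have : (x - 2) * (x + 2) = 0 := by rw [h0] at hr; linear_combination -hr
      rcases mul_eq_zero.1 this with h | h
      · exact absurd (by linear_combination h) hx2
      · linear_combination h
    refine ⟨(x+r)/(2*r), -((x-r)/(2*r)), ![1, (x-r)/2], ![1, (x+r)/2], ?_⟩
    ext i j
    fin_cases i <;> fin_cases j <;>
      simp [vecMulVec_apply, Matrix.add_apply, Matrix.smul_apply, smul_eq_mul] <;>
      field_simp <;>
      first | ring1 | linear_combination 2*r*hr

/-- The matrix `[[1,x],[0,1]]` has strength `1` (i.e. is of the form `a • u⊗v + b • v⊗u`)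
if and only if `x ≠ 2` and `x ≠ -2`; its strength is `2` when `x = ±2` and `1` otherwise. -/
theorem stmt4 (K : Type*) [Field K] [IsAlgClosed K] [CharZero K] (x : K) :
    ((∃ (a b : K) (u v : Fin 2 → K),
        !![(1 : K), x; 0, 1] = a • vecMulVec u v + b • vecMulVec v u) ↔ (x ≠ 2 ∧ x ≠ -2)) ∧
    sInf {k : ℕ | ∃ (a b : Fin k → K) (u v : Fin k → (Fin 2 → K)),
        !![(1 : K), x; 0, 1] = ∑ i, (a i • vecMulVec (u i) (v i) + b i • vecMulVec (v i) (u i))}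
      = if x = 2 ∨ x = -2 then 2 else 1 := by
  set S : Set ℕ := {k : ℕ | ∃ (a b : Fin k → K) (u v : Fin k → (Fin 2 → K)),
        !![(1 : K), x; 0, 1] = ∑ i, (a i • vecMulVec (u i) (v i) + b i • vecMulVec (v i) (u i))}
      with hS
  have hzero : 0 ∉ S := by
    rintro ⟨a, b, u, v, h⟩
    have := congrFun (congrFun h 0) 0
    simp at this
  have hone : 1 ∈ S ↔ (x ≠ 2 ∧ x ≠ -2) := by
    rw [← strength_one_iff K x]
    constructor
    · rintro ⟨a, b, u, v, h⟩
      exact ⟨a 0, b 0, u 0, v 0, by simpa using h⟩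
    · rintro ⟨a, b, u, v, h⟩
      exact ⟨![a], ![b], ![u], ![v], by simpa using h⟩
  have htwo : 2 ∈ S := by
    refine ⟨![1, 1], ![0, 0], ![![1, 0], ![x, 1]], ![![1, 0], ![0, 1]], ?_⟩
    ext i j
    fin_cases i <;> fin_cases j <;>
      simp [Fin.sum_univ_two, vecMulVec_apply, Matrix.add_apply, Matrix.smul_apply]
  refine ⟨strength_one_iff K x, ?_⟩
  by_cases hx : x = 2 ∨ x = -2
  · rw [if_pos hx]
    have h1 : 1 ∉ S := by
      rw [hone]
      tauto
    have hle : sInf S ≤ 2 := Nat.sInf_le htwo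
    have hmem : sInf S ∈ S := Nat.sInf_mem ⟨2, htwo⟩
    interval_cases h : sInf S
    · exact absurd hmem hzero
    · exact absurd hmem h1
    · rfl
  · rw [if_neg hx]
    push_neg at hx
    have h1 : 1 ∈ S := hone.mpr hx
    have hle : sInf S ≤ 1 := Nat.sInf_le h1
    have hmem : sInf S ∈ S := Nat.sInf_mem ⟨1, h1⟩
    interval_cases h : sInf S
    · exact absurd hmem hzero
    · rfl
end

section
/- The set of 2×2 matrices over an algebraically closed field K of characteristic 0 that have strength at most 1 (i.e., can be written as a u⊗v + b v⊗u for some scalars a,b and vectors u,v ∈ K²) is not Zariski-closed in K^{2×2}. -/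
/-!
For `x ≠ ±2` the matrix `!![1, x; 0, 1]` has strength at most 1, but `!![1, 2; 0, 1]` does not.
A polynomial in the entries that vanishes on all matrices of strength at most 1 restricts, along
the line `x ↦ !![1, x; 0, 1]`, to a one-variable polynomial with infinitely many roots, so it also
vanishes at `x = 2`.
-/

open Matrix Polynomial

def StrengthLeOne {n R : Type*} [CommRing R] (A : Matrix n n R) : Prop :=
  ∃ (a b : R) (u v : n → R), A = a • vecMulVec u v + b • vecMulVec v u

theorem MvPolynomial.eval_polynomial_eval_eq_zero_of_infinite {K σ : Type*} [Field K]
    (γ : σ → K[X]) (p : MvPolynomial σ K)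
    (h : {x : K | MvPolynomial.eval (fun i => (γ i).eval x) p = 0}.Infinite) (x : K) :
    MvPolynomial.eval (fun i => (γ i).eval x) p = 0 := by
  have eval_eq (y : K) : MvPolynomial.eval (fun i => (γ i).eval y) p =
      (MvPolynomial.eval₂ Polynomial.C γ p).eval y := by
    rw [MvPolynomial.polynomial_eval_eval₂,
      show (evalRingHom y).comp Polynomial.C = RingHom.id K from
        RingHom.ext fun _ => Polynomial.eval_C]
    rfl
  have hzero : MvPolynomial.eval₂ Polynomial.C γ p = 0 :=
    eq_zero_of_infinite_isRoot _ (by simpa only [eval_eq, IsRoot.def] using h)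
  rw [eval_eq, hzero, Polynomial.eval_zero]

/-- The witness comes from a root `t` of `t ^ 2 - x t + 1`, so that `t + t⁻¹ = x`;
`x ^ 2 ≠ 4` is exactly what makes `t ^ 2 ≠ 1`. -/
theorem strengthLeOne_unitriangular {K : Type*} [Field K] [IsAlgClosed K] {x : K}
    (hx : x ^ 2 ≠ 4) : StrengthLeOne !![1, x; 0, 1] := by
  obtain ⟨t, ht⟩ := IsAlgClosed.exists_root (X ^ 2 - C x * X + 1 : K[X])
    (by rw [show (X ^ 2 - C x * X + 1 : K[X]).degree = 2 by compute_degree!]; decide)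
  replace ht : t ^ 2 - x * t + 1 = 0 := by simpa using ht
  have ht0 : t ≠ 0 := by rintro rfl; simp at ht
  have ht1 : 1 - t ^ 2 ≠ 0 := fun h =>
    hx (by linear_combination x ^ 2 * h - (x * t + 2) * (ht + h))
  refine ⟨1 / (1 - t ^ 2), -t ^ 2 / (1 - t ^ 2), ![1, t], ![1, t⁻¹], ?_⟩
  ext i j
  fin_cases i <;> fin_cases j <;> simp [vecMulVec] <;> field_simp
  · ring
  · linear_combination (t ^ 2 - 1) * ht
  · ring
  · ring

theorem not_strengthLeOne_unitriangular_two {R : Type*} [CommRing R] [IsReduced R]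
    [Nontrivial R] : ¬ StrengthLeOne !![(1 : R), 2; 0, 1] := by
  rintro ⟨a, b, u, v, h⟩
  have h00 := congrFun₂ h 0 0
  have h01 := congrFun₂ h 0 1
  have h10 := congrFun₂ h 1 0
  have h11 := congrFun₂ h 1 1
  simp only [of_apply, cons_val', cons_val_zero, cons_val_one, empty_val', cons_val_fin_one,
    Matrix.add_apply, Matrix.smul_apply, vecMulVec_apply, smul_eq_mul] at h00 h01 h10 h11
  set c := a + b
  set r := c * (u 0 * v 1)
  set s := c * (u 1 * v 0)
  have hrs : r * s = 1 := by linear_combination -(c * (u 1 * v 1)) * h00 - h11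
  have hsum : r + s = 2 := by linear_combination -(h01 + h10)
  have hr_eq_s : r = s := sub_eq_zero.mp <| IsReduced.eq_zero _
    ⟨2, by linear_combination (r + s + 2) * hsum - 4 * hrs⟩
  have hcr : c * r = 0 := by linear_combination -c * h10 + a * hr_eq_s
  exact one_ne_zero <| by linear_combination h00 - c * (u 0 * v 0) * hrs + u 0 * v 0 * s * hcr

theorem stmt5_general (K : Type*) [Field K] [IsAlgClosed K] :
    ¬ ∃ S : Set (MvPolynomial (Fin 2 × Fin 2) K),
      {A : Matrix (Fin 2) (Fin 2) K | ∃ (a b : K) (u v : Fin 2 → K),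
          A = a • vecMulVec u v + b • vecMulVec v u}
        = {A : Matrix (Fin 2) (Fin 2) K |
            ∀ p ∈ S, MvPolynomial.eval (fun q => A q.1 q.2) p = 0} := by
  rintro ⟨S, hS⟩
  let γ : Fin 2 × Fin 2 → K[X] := fun q => !![1, X; 0, 1] q.1 q.2
  have hγ (x : K) : (fun q => (γ q).eval x) = fun q => !![1, x; 0, 1] q.1 q.2 := by
    funext ⟨i, j⟩
    fin_cases i <;> fin_cases j <;> simp [γ]
  have hmem (x : K) : StrengthLeOne !![1, x; 0, 1] ↔
      ∀ p ∈ S, MvPolynomial.eval (fun q => (γ q).eval x) p = 0 := by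
    rw [hγ]
    exact Set.ext_iff.mp hS _
  have hfin : {x : K | x ^ 2 = 4}.Finite := (Set.toFinite {2, -2}).subset fun x (hx : x ^ 2 = 4) => by
    rw [show (4 : K) = 2 ^ 2 by norm_num, sq_eq_sq_iff_eq_or_eq_neg] at hx
    exact hx
  refine not_strengthLeOne_unitriangular_two ((hmem 2).2 fun p hp => ?_)
  refine MvPolynomial.eval_polynomial_eval_eq_zero_of_infinite γ p
    (hfin.infinite_compl.mono fun x hx => ?_) 2
  exact (hmem x).1 (strengthLeOne_unitriangular hx) p hp

/-- The set of `2 × 2` matrices of strength at most 1 is not Zariski-closed: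
it is not the common zero locus of any set of polynomials in the matrix entries. -/
theorem stmt5 (K : Type*) [Field K] [IsAlgClosed K] [CharZero K] :
    ¬ ∃ S : Set (MvPolynomial (Fin 2 × Fin 2) K),
      {A : Matrix (Fin 2) (Fin 2) K | ∃ (a b : K) (u v : Fin 2 → K),
          A = a • vecMulVec u v + b • vecMulVec v u}
        = {A : Matrix (Fin 2) (Fin 2) K |
            ∀ p ∈ S, MvPolynomial.eval (fun q => A q.1 q.2) p = 0} :=
  stmt5_general K
end

section
/- Let K be a field of characteristic 0 and d ≥ 2, e with 0 < e < d. Every GL(V)-equivariant bilinear map α: Sᵉ(V) × S^{d−e}(V) → S^d(V), defined naturally in V (i.e., a bilinear polynomial transformation), is a scalar multiple of the multiplication map (g,h) ↦ g·h. -/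
/-!
Over a field of characteristic zero, homogeneous polynomials of degree `e` are spanned by the
powers `ℓ ^ e` of linear forms: if `q * (s • x + y) ^ (r + 1) ∈ S` for every scalar `s`, then the
coefficient of `s`, namely `(r + 1) • q * x * y ^ r`, lies in `S` as well.  By bilinearity it
therefore suffices to know `α (ℓ₁ ^ e) (ℓ₂ ^ (d - e))`, which by naturality under
`X₀ ↦ ℓ₁, X₁ ↦ ℓ₂` is the image of `p = α (X₀ ^ e) (X₁ ^ (d - e))`.  Naturality under
`X₀ ↦ t • X₀` shows that every monomial of `p` has `X₀`-degree `e`, so homogeneity forces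
`p = c • X₀ ^ e * X₁ ^ (d - e)`.
-/

open MvPolynomial Finset

theorem Submodule.mem_of_forall_sum_pow_smul_mem {K M : Type*} [Field K] [Infinite K]
    [AddCommGroup M] [Module K M] (S : Submodule K M) {N : ℕ} (v : ℕ → M)
    (h : ∀ s : K, ∑ k ∈ range N, s ^ k • v k ∈ S) {k : ℕ} (hk : k < N) : v k ∈ S := by
  rw [← Submodule.Quotient.mk_eq_zero, ← Module.forall_dual_apply_eq_zero_iff K]
  intro φ
  set P : Polynomial K := ∑ j ∈ range N, Polynomial.C (φ (S.mkQ (v j))) * Polynomial.X ^ j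
  have hP : P = 0 := Polynomial.funext fun s => by
    have h0 : S.mkQ (∑ j ∈ range N, s ^ j • v j) = 0 :=
      (Submodule.Quotient.mk_eq_zero S).mpr (h s)
    simp only [P, Polynomial.eval_finsetSum, Polynomial.eval_mul, Polynomial.eval_C,
      Polynomial.eval_pow, Polynomial.eval_X, Polynomial.eval_zero]
    simpa [mul_comm] using congrArg φ h0
  simpa [P, Polynomial.finsetSum_coeff, Polynomial.coeff_C_mul_X_pow, hk] using
    congrArg (Polynomial.coeff · k) hP

theorem Submodule.mul_mul_pow_mem_of_forall_mul_smul_add_pow_mem {K A : Type*} [Field K]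
    [CharZero K] [CommRing A] [Algebra K A] (S : Submodule K A) {q x y : A} {r : ℕ}
    (h : ∀ s : K, q * (s • x + y) ^ (r + 1) ∈ S) : q * x * y ^ r ∈ S := by
  have hexpand (s : K) : q * (s • x + y) ^ (r + 1) =
      ∑ k ∈ range (r + 2), s ^ k • ((r + 1).choose k • (q * x ^ k * y ^ (r + 1 - k))) := by
    rw [add_pow, Finset.mul_sum]
    refine Finset.sum_congr rfl fun k _ => ?_
    rw [smul_pow, nsmul_eq_mul, Algebra.smul_def, Algebra.smul_def]
    ring
  have h1 := S.mem_of_forall_sum_pow_smul_mem _ (fun s => hexpand s ▸ h s) (k := 1) (by omega)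
  rw [Nat.choose_one_right, pow_one, Nat.add_sub_cancel, ← Nat.cast_smul_eq_nsmul K] at h1
  exact (S.smul_mem_iff (Nat.cast_ne_zero.mpr r.succ_ne_zero)).mp h1

namespace MvPolynomial

section LinearForms

variable {σ K : Type*} [Fintype σ] [Field K] [CharZero K]

theorem mul_linearCombination_X_pow_mem_span_pow {k : ℕ} {q : MvPolynomial σ K}
    (hq : q ∈ homogeneousSubmodule σ K 1 ^ k) (r : ℕ) (m : σ → K) :
    q * Fintype.linearCombination K X m ^ r ∈
      Submodule.span K (Set.range fun a => Fintype.linearCombination K X a ^ (k + r)) := by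
  induction hq using Submodule.pow_induction_on_left' generalizing r m with
  | algebraMap c =>
    rw [← Algebra.smul_def, zero_add]
    exact Submodule.smul_mem _ _ (Submodule.subset_span ⟨m, rfl⟩)
  | add q₁ q₂ i _ _ ih₁ ih₂ =>
    rw [add_mul]
    exact add_mem (ih₁ r m) (ih₂ r m)
  | mem_mul x hx i q _ ih =>
    rw [homogeneousSubmodule_one_eq_span_X, ← Fintype.range_linearCombination] at hx
    obtain ⟨b, rfl⟩ := hx
    rw [mul_comm _ q, Nat.succ_add, ← Nat.add_succ]
    refine Submodule.mul_mul_pow_mem_of_forall_mul_smul_add_pow_mem _ fun s => ?_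
    simpa only [map_add, map_smul] using ih (r + 1) (s • b + m)

theorem IsHomogeneous.mem_span_linearCombination_X_pow {e : ℕ} {p : MvPolynomial σ K}
    (hp : p.IsHomogeneous e) :
    p ∈ Submodule.span K (Set.range fun a => Fintype.linearCombination K X a ^ e) := by
  rw [← mem_homogeneousSubmodule, ← homogeneousSubmodule_one_pow] at hp
  simpa using mul_linearCombination_X_pow_mem_span_pow hp 0 0

end LinearForms

theorem coeff_aeval_smul_X {σ R : Type*} [CommSemiring R] (t : σ → R) (p : MvPolynomial σ R)
    (u : σ →₀ ℕ) :
    coeff u (aeval (fun i => t i • X i) p) = (u.prod fun i k => t i ^ k) * coeff u p := by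
  classical
  induction p using MvPolynomial.induction_on' with
  | monomial v b =>
    have hv : aeval (fun i => t i • X i) (monomial v b) =
        monomial v ((v.prod fun i k => t i ^ k) * b) := by
      rw [aeval_monomial, monomial_eq]
      simp_rw [smul_eq_C_mul, mul_pow, Finsupp.prod_mul, map_mul, map_finsuppProd, map_pow,
        algebraMap_eq]
      ring
    rw [hv, coeff_monomial, coeff_monomial]
    split_ifs with h
    · rw [h]
    · rw [mul_zero]
  | add p q hp hq => rw [map_add, coeff_add, coeff_add, hp, hq, mul_add]

theorem eq_smul_X_pow_mul_X_pow_of_aeval_smul_X {K : Type*} [Field K] [CharZero K]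
    {p : MvPolynomial (Fin 2) K} {d e : ℕ} (hp : p.IsHomogeneous d)
    (hscale : ∀ t : K, aeval (fun i => ![t, 1] i • X i) p = t ^ e • p) :
    p = coeff (Finsupp.single 0 e + Finsupp.single 1 (d - e)) p • (X 0 ^ e * X 1 ^ (d - e)) := by
  set u₀ : Fin 2 →₀ ℕ := Finsupp.single 0 e + Finsupp.single 1 (d - e)
  have hsupp (u : Fin 2 →₀ ℕ) (hu : coeff u p ≠ 0) : u = u₀ := by
    have h2 : (2 : K) ^ u 0 = 2 ^ e := by
      have := congrArg (coeff u) (hscale 2)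
      rw [coeff_aeval_smul_X, coeff_smul, smul_eq_mul, Finsupp.prod_fintype _ _ (by simp),
        Fin.prod_univ_two] at this
      simpa using mul_right_cancel₀ hu this
    have h0 : u 0 = e := Nat.pow_right_injective le_rfl (by exact_mod_cast h2)
    have hdeg : u 0 + u 1 = d := by
      have := hp hu
      rwa [Pi.one_def, ← Finsupp.degree_eq_weight_one, Finsupp.degree_eq_sum,
        Fin.sum_univ_two] at this
    ext i
    fin_cases i <;> simp [u₀] <;> omega
  have hmono : (X 0 ^ e * X 1 ^ (d - e) : MvPolynomial (Fin 2) K) = monomial u₀ 1 := by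
    rw [X_pow_eq_monomial, X_pow_eq_monomial, monomial_mul, one_mul]
  ext u
  rw [hmono, coeff_smul, coeff_monomial, smul_eq_mul]
  split_ifs with h
  · rw [h, mul_one]
  · rw [mul_zero]
    by_contra hu
    exact h (hsupp u hu).symm

end MvPolynomial

theorem LinearMap.apply₂_eq_of_mem_span {R M N P : Type*} [CommSemiring R] [AddCommMonoid M]
    [AddCommMonoid N] [AddCommMonoid P] [Module R M] [Module R N] [Module R P] {s : Set M}
    {t : Set N} {B B' : M →ₗ[R] N →ₗ[R] P} (h : ∀ x ∈ s, ∀ y ∈ t, B x y = B' x y) {x : M}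
    {y : N} (hx : x ∈ Submodule.span R s) (hy : y ∈ Submodule.span R t) : B x y = B' x y := by
  have hxt (y : N) (hy : y ∈ t) : B x y = B' x y :=
    LinearMap.eqOn_span (f := B.flip y) (g := B'.flip y) (fun x hx => h x hx y hy) hx
  exact LinearMap.eqOn_span (f := B x) (g := B' x) hxt hy

theorem stmt8_general (K : Type*) [Field K] [CharZero K] (d e : ℕ)
    (α : ∀ n : ℕ, MvPolynomial (Fin n) K →ₗ[K] MvPolynomial (Fin n) K →ₗ[K]
        MvPolynomial (Fin n) K)
    (hhom : ∀ (n : ℕ) (g h : MvPolynomial (Fin n) K),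
        g.IsHomogeneous e → h.IsHomogeneous (d - e) → (α n g h).IsHomogeneous d)
    (hnat : ∀ (n m : ℕ) (C : Matrix (Fin m) (Fin n) K) (g h : MvPolynomial (Fin n) K),
        g.IsHomogeneous e → h.IsHomogeneous (d - e) →
        aeval (fun j : Fin n => ∑ i : Fin m, C i j • (X i : MvPolynomial (Fin m) K)) (α n g h)
          = α m (aeval (fun j : Fin n => ∑ i : Fin m, C i j • (X i : MvPolynomial (Fin m) K)) g)
                (aeval (fun j : Fin n => ∑ i : Fin m, C i j • (X i : MvPolynomial (Fin m) K)) h)) :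
    ∃ c : K, ∀ (n : ℕ) (g h : MvPolynomial (Fin n) K),
      g.IsHomogeneous e → h.IsHomogeneous (d - e) → α n g h = c • (g * h) := by
  have hXe := isHomogeneous_X_pow (R := K) (0 : Fin 2) e
  have hXde := isHomogeneous_X_pow (R := K) (1 : Fin 2) (d - e)
  obtain ⟨p, hp_def⟩ : ∃ p, α 2 (X 0 ^ e) (X 1 ^ (d - e)) = p := ⟨_, rfl⟩
  have hp_scale (t : K) : aeval (fun i => ![t, 1] i • X i) p = t ^ e • p := by
    have := hnat 2 2 (Matrix.diagonal ![t, 1]) _ _ hXe hXde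
    simp only [Matrix.diagonal_apply, ite_smul, zero_smul, Finset.sum_ite_eq', Finset.mem_univ,
      if_true, hp_def] at this
    rw [this, ← hp_def]
    simp [smul_pow]
  obtain ⟨c, hp⟩ : ∃ c : K, p = c • (X 0 ^ e * X 1 ^ (d - e)) :=
    ⟨_, eq_smul_X_pow_mul_X_pow_of_aeval_smul_X (hp_def ▸ hhom 2 _ _ hXe hXde) hp_scale⟩
  have hpow (n : ℕ) (a b : Fin n → K) :
      α n (Fintype.linearCombination K X a ^ e) (Fintype.linearCombination K X b ^ (d - e)) =
        c • (Fintype.linearCombination K X a ^ e * Fintype.linearCombination K X b ^ (d - e)) := by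
    have := hnat 2 n (Matrix.of fun i j => ![a, b] j i) _ _ hXe hXde
    rw [hp_def, hp] at this
    simpa [Fintype.linearCombination_apply] using this.symm
  refine ⟨c, fun n g h hg hh => ?_⟩
  have := LinearMap.apply₂_eq_of_mem_span (B := α n) (B' := c • LinearMap.mul K _)
    (by rintro _ ⟨a, rfl⟩ _ ⟨b, rfl⟩; simpa using hpow n a b)
    hg.mem_span_linearCombination_X_pow hh.mem_span_linearCombination_X_pow
  simpa using this

/-- Every bilinear polynomial transformation `Sᵉ ⊕ S^{d-e} → S^d` (a family of bilinear maps
on homogeneous polynomials, natural in the vector space, i.e. commuting with all linear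
substitutions of variables) is a scalar multiple of the multiplication map. -/
theorem stmt8 (K : Type*) [Field K] [CharZero K] (d e : ℕ) (hd : 2 ≤ d) (he : 0 < e)
    (hed : e < d)
    (α : ∀ n : ℕ, MvPolynomial (Fin n) K →ₗ[K] MvPolynomial (Fin n) K →ₗ[K]
        MvPolynomial (Fin n) K)
    (hhom : ∀ (n : ℕ) (g h : MvPolynomial (Fin n) K),
        g.IsHomogeneous e → h.IsHomogeneous (d - e) → (α n g h).IsHomogeneous d)
    (hnat : ∀ (n m : ℕ) (C : Matrix (Fin m) (Fin n) K) (g h : MvPolynomial (Fin n) K),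
        g.IsHomogeneous e → h.IsHomogeneous (d - e) →
        aeval (fun j : Fin n => ∑ i : Fin m, C i j • (X i : MvPolynomial (Fin m) K)) (α n g h)
          = α m (aeval (fun j : Fin n => ∑ i : Fin m, C i j • (X i : MvPolynomial (Fin m) K)) g)
                (aeval (fun j : Fin n => ∑ i : Fin m, C i j • (X i : MvPolynomial (Fin m) K)) h)) :
    ∃ c : K, ∀ (n : ℕ) (g h : MvPolynomial (Fin n) K),
      g.IsHomogeneous e → h.IsHomogeneous (d - e) → α n g h = c • (g * h) :=
  stmt8_general K d e α hhom hnat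
end

section
/- Let K have characteristic 0, d ≥ 2, and V a finite-dimensional K-vector space. The strength of f ∈ S^d(V) defined via products (minimal k with f = Σ gᵢhᵢ, deg gᵢ, deg hᵢ < d) equals the strength defined via bilinear polynomial transformations (minimal k with f = Σ αᵢ(qᵢ, rᵢ) where αᵢ: Qᵢ ⊕ Rᵢ → S^d are bilinear polynomial transformations from irreducible polynomial functors Qᵢ, Rᵢ of positive degrees summing to d). -/
open MvPolynomial

/-- The action of a linear map (given by the matrix `C : K^n → K^m`) on the `e`-th tensor
power `T^e(Kⁿ) = (Kⁿ)^{⊗e}`, in coordinates. Elements of `T^e(Kⁿ)` are recorded by their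
coordinates with respect to the standard basis, i.e. as functions `(Fin e → Fin n) → K`.
Every irreducible polynomial functor of degree `e` is a subfunctor of `T^e`. -/
noncomputable def tensorMap {K : Type*} [CommRing K] {e n m : ℕ}
    (C : Matrix (Fin m) (Fin n) K) (q : (Fin e → Fin n) → K) : (Fin e → Fin m) → K :=
  fun j => ∑ i : Fin e → Fin n, (∏ l, C (j l) (i l)) * q i

/-- The substitution of variables induced by the linear map `C : K^n → K^m` on polynomials,
i.e. the map `S(C) : S(Kⁿ) → S(K^m)`. -/
noncomputable def substMap {K : Type*} [CommSemiring K] {n m : ℕ}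
    (C : Matrix (Fin m) (Fin n) K) :
    MvPolynomial (Fin n) K →ₐ[K] MvPolynomial (Fin m) K :=
  aeval (fun j : Fin n => ∑ i : Fin m, C i j • (X i : MvPolynomial (Fin m) K))

/-!
A tensor `q ∈ T^e(Kⁿ)` determines the form `tensorSym q = ∑ᵢ q(i) x_{i 0} ⋯ x_{i (e-1)}`; this map
is natural and onto the forms of degree `e`, so a decomposition `f = ∑ gᵢ hᵢ` is also one through
the natural bilinear maps `(q, r) ↦ tensorSym q * tensorSym r`.

Conversely, let `α : T^e × T^e' → S` be natural and `N = e + e'`. Naturality under the coordinate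
maps `Fin N → Fin m` shows that `α` is determined by its value `p₀` on the pair of basis tensors
`(ε₀ ⊗ ⋯ ⊗ ε_{e-1}, ε_e ⊗ ⋯ ⊗ ε_{N-1})`. Naturality under the diagonal torus makes `p₀` a weight
vector of weight `(1, …, 1)`, and in characteristic zero (compare `2 ^ k` with `2`) this forces
`p₀ = c • x₀ ⋯ x_{N-1}`. Hence `α = c • tensorSymMul`, and each `αᵢ(qᵢ, rᵢ)` is a product of
forms of degrees `eᵢ` and `d - eᵢ`.
-/

section CommSemiring

variable {K : Type*} [CommSemiring K]

noncomputable def tensorSym (e n : ℕ) : ((Fin e → Fin n) → K) →ₗ[K] MvPolynomial (Fin n) K :=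
  Fintype.linearCombination K fun i : Fin e → Fin n => ∏ l, X (i l)

noncomputable def tensorSymMul (e e' m : ℕ) :
    ((Fin e → Fin m) → K) →ₗ[K] ((Fin e' → Fin m) → K) →ₗ[K] MvPolynomial (Fin m) K :=
  (LinearMap.mul K _).compl₁₂ (tensorSym e m) (tensorSym e' m)

variable {e n m : ℕ}

lemma tensorSym_single (i : Fin e → Fin n) :
    tensorSym e n (Pi.single i (1 : K)) = ∏ l, X (i l) := by
  rw [tensorSym, Fintype.linearCombination_apply_single, one_smul]

lemma isHomogeneous_tensorSym (q : (Fin e → Fin n) → K) : (tensorSym e n q).IsHomogeneous e := by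
  rw [← mem_homogeneousSubmodule, tensorSym, Fintype.linearCombination_apply]
  refine Submodule.sum_mem _ fun i _ => Submodule.smul_mem _ _ ?_
  simpa using IsHomogeneous.prod Finset.univ _ (fun _ => 1) fun l _ => isHomogeneous_X K (i l)

lemma exists_prod_X_eq_monomial {σ : Type*} {s : σ →₀ ℕ} (hs : s.degree = e) :
    ∃ i : Fin e → σ, ∏ l, X (i l) = (monomial s 1 : MvPolynomial σ K) := by
  set L := (Finsupp.toMultiset s).toList
  obtain rfl : L.length = e := by
    rw [← hs, Multiset.length_toList, Finsupp.card_toMultiset, Finsupp.degree_apply]; rfl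
  refine ⟨fun l => L[(l : ℕ)], ?_⟩
  rw [Fin.prod_univ_fun_getElem, Multiset.prod_map_toList, Finsupp.toMultiset_map,
    Finsupp.prod_toMultiset,
    Finsupp.prod_mapDomain_index (fun _ => pow_zero _) (fun _ _ _ => pow_add _ _ _), monomial_eq,
    C_1, one_mul]

lemma exists_tensorSym_eq_of_isHomogeneous {g : MvPolynomial (Fin n) K}
    (hg : g.IsHomogeneous e) : ∃ q, tensorSym e n q = g := by
  rw [← LinearMap.mem_range, g.as_sum]
  refine Submodule.sum_mem _ fun s hs => ?_
  have hdeg : s.degree = e := by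
    rw [Finsupp.degree_eq_weight_one]; exact hg (mem_support_iff.mp hs)
  obtain ⟨i, hi⟩ := exists_prod_X_eq_monomial (K := K) hdeg
  refine ⟨coeff s g • Pi.single i 1, ?_⟩
  rw [map_smul, tensorSym_single, hi, smul_monomial, smul_eq_mul, mul_one]

lemma substMap_submatrix_one (σ : Fin n → Fin m) :
    substMap ((1 : Matrix (Fin m) (Fin m) K).submatrix id σ) = rename σ := by
  refine MvPolynomial.algHom_ext fun b => ?_
  simp [substMap, Matrix.one_apply]

lemma coeff_substMap_diagonal (t : Fin n → K) (p : MvPolynomial (Fin n) K) (s : Fin n →₀ ℕ) :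
    coeff s (substMap (Matrix.diagonal t) p) = (∏ a, t a ^ s a) * coeff s p := by
  induction p using MvPolynomial.induction_on' with
  | monomial u a =>
    have : substMap (Matrix.diagonal t) (monomial u a) = monomial u ((∏ b, t b ^ u b) * a) := by
      simp [substMap, Matrix.diagonal_apply, Finsupp.prod_fintype, monomial_eq, smul_eq_C_mul,
        mul_pow, Finset.prod_mul_distrib]
      ring
    rw [this, coeff_monomial, coeff_monomial]
    split_ifs with h <;> simp [h]
  | add p q hp hq => rw [map_add, coeff_add, coeff_add, hp, hq, mul_add]

end CommSemiring

section CommRing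

variable {K : Type*} [CommRing K] {e n m : ℕ}

def IsNaturalBilinear {e e' : ℕ} (α : ∀ m : ℕ,
    ((Fin e → Fin m) → K) →ₗ[K] ((Fin e' → Fin m) → K) →ₗ[K] MvPolynomial (Fin m) K) : Prop :=
  ∀ (m m' : ℕ) (C : Matrix (Fin m') (Fin m) K) (q : (Fin e → Fin m) → K)
    (r : (Fin e' → Fin m) → K), substMap C (α m q r) = α m' (tensorMap C q) (tensorMap C r)

lemma substMap_tensorSym (C : Matrix (Fin m) (Fin n) K) (q : (Fin e → Fin n) → K) :
    substMap C (tensorSym e n q) = tensorSym e m (tensorMap C q) := by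
  simp only [tensorSym, Fintype.linearCombination_apply, tensorMap, map_sum, map_smul, map_prod,
    substMap, aeval_X, Finset.prod_univ_sum, Finset.sum_smul, Finset.smul_sum]
  rw [Finset.sum_comm]
  refine Finset.sum_congr rfl fun j _ => Finset.sum_congr rfl fun i _ => ?_
  rw [Finset.prod_smul, smul_smul, mul_comm]

lemma isNaturalBilinear_tensorSymMul (e e' : ℕ) :
    IsNaturalBilinear (K := K) (tensorSymMul e e') := by
  intro m m' C q r
  simp [tensorSymMul, substMap_tensorSym]

lemma tensorMap_single (C : Matrix (Fin m) (Fin n) K) (i : Fin e → Fin n) :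
    tensorMap C (Pi.single i 1) = fun j => ∏ l, C (j l) (i l) := by
  funext j
  simp [tensorMap, Pi.single_apply]

lemma tensorMap_diagonal_single (t : Fin n → K) (i : Fin e → Fin n) :
    tensorMap (Matrix.diagonal t) (Pi.single i 1) = (∏ l, t (i l)) • Pi.single i 1 := by
  funext j
  rcases eq_or_ne j i with rfl | h
  · simp [tensorMap_single]
  · simp [tensorMap_single, Matrix.diagonal_apply, Finset.prod_ite_zero, h, ← funext_iff]

lemma tensorMap_submatrix_one_single (σ : Fin n → Fin m) (i : Fin e → Fin n) :
    tensorMap ((1 : Matrix (Fin m) (Fin m) K).submatrix id σ) (Pi.single i 1) =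
      Pi.single (σ ∘ i) 1 := by
  funext j
  simp [tensorMap_single, Matrix.one_apply, Finset.prod_ite_zero, Pi.single_apply, funext_iff]

variable [NoZeroDivisors K] [CharZero K]

lemma eq_one_of_coeff_ne_zero_of_substMap_diagonal {N : ℕ} {p : MvPolynomial (Fin N) K}
    (hp : ∀ t : Fin N → K, substMap (Matrix.diagonal t) p = (∏ a, t a) • p)
    {s : Fin N →₀ ℕ} (hs : coeff s p ≠ 0) (a : Fin N) : s a = 1 := by
  have h := congrArg (coeff s) (hp (Pi.mulSingle a 2))
  rw [coeff_substMap_diagonal, coeff_smul, smul_eq_mul] at h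
  simp [Pi.mulSingle_apply, ite_pow, Finset.prod_ite_eq'] at h
  exact (Nat.pow_eq_self_iff one_lt_two).1 (by exact_mod_cast h.resolve_right hs)

lemma exists_eq_smul_prod_X_of_substMap_diagonal {N : ℕ} {p : MvPolynomial (Fin N) K}
    (hp : ∀ t : Fin N → K, substMap (Matrix.diagonal t) p = (∏ a, t a) • p) :
    ∃ c : K, p = c • ∏ a, X a := by
  set s₀ : Fin N →₀ ℕ := ∑ a, Finsupp.single a 1
  refine ⟨coeff s₀ p, ?_⟩
  have hX : (∏ a, X a : MvPolynomial (Fin N) K) = monomial s₀ 1 := by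
    rw [monomial_sum_one]; rfl
  rw [hX]
  ext s
  rw [coeff_smul, coeff_monomial]
  split_ifs with h
  · rw [h, smul_eq_mul, mul_one]
  · rw [smul_zero]
    by_contra hs
    refine h (Finsupp.ext fun a => ?_)
    simp [s₀, eq_one_of_coeff_ne_zero_of_substMap_diagonal hp hs a]

theorem IsNaturalBilinear.exists_eq_smul_tensorSymMul {e e' : ℕ} {α : ∀ m : ℕ,
    ((Fin e → Fin m) → K) →ₗ[K] ((Fin e' → Fin m) → K) →ₗ[K] MvPolynomial (Fin m) K}
    (hα : IsNaturalBilinear α) : ∃ c : K, ∀ m, α m = c • tensorSymMul e e' m := by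
  set p₀ := α (e + e') (Pi.single (Fin.castAdd e') 1) (Pi.single (Fin.natAdd e) 1)
  obtain ⟨c, hc⟩ : ∃ c : K, p₀ = c • ∏ a, X a := by
    refine exists_eq_smul_prod_X_of_substMap_diagonal fun t => ?_
    rw [hα, tensorMap_diagonal_single, tensorMap_diagonal_single, map_smul, map_smul,
      LinearMap.smul_apply, smul_smul, mul_comm, Fin.prod_univ_add]
  refine ⟨c, fun m => LinearMap.ext_basis (Pi.basisFun K _) (Pi.basisFun K _) fun i j => ?_⟩
  calc α m (Pi.basisFun K _ i) (Pi.basisFun K _ j)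
      = rename (Fin.append i j) p₀ := by
        have hi : Fin.append i j ∘ Fin.castAdd e' = i := funext (Fin.append_left i j)
        have hj : Fin.append i j ∘ Fin.natAdd e = j := funext (Fin.append_right i j)
        rw [← substMap_submatrix_one, hα, tensorMap_submatrix_one_single,
          tensorMap_submatrix_one_single, hi, hj, Pi.basisFun_apply, Pi.basisFun_apply]
    _ = c • tensorSymMul e e' m (Pi.basisFun K _ i) (Pi.basisFun K _ j) := by
        rw [hc, map_smul, map_prod, Fin.prod_univ_add]
        simp [tensorSymMul, tensorSym_single]

end CommRing

theorem stmt9_general (K : Type*) [Field K] [CharZero K]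
    (d : ℕ) (n : ℕ) (f : MvPolynomial (Fin n) K) :
    sInf {k : ℕ | ∃ g h : Fin k → MvPolynomial (Fin n) K,
        (∀ i, ∃ e : ℕ, 0 < e ∧ e < d ∧ (g i).IsHomogeneous e ∧ (h i).IsHomogeneous (d - e)) ∧
        f = ∑ i, g i * h i}
    = sInf {k : ℕ | ∃ e : Fin k → ℕ, (∀ i, 0 < e i ∧ e i < d) ∧
        ∃ α : ∀ (i : Fin k) (m : ℕ), ((Fin (e i) → Fin m) → K) →ₗ[K]
            ((Fin (d - e i) → Fin m) → K) →ₗ[K] MvPolynomial (Fin m) K,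
          (∀ (i : Fin k) (m m' : ℕ) (C : Matrix (Fin m') (Fin m) K)
              (q : (Fin (e i) → Fin m) → K) (r : (Fin (d - e i) → Fin m) → K),
            substMap C (α i m q r) = α i m' (tensorMap C q) (tensorMap C r)) ∧
          ∃ (q : ∀ i : Fin k, (Fin (e i) → Fin n) → K)
            (r : ∀ i : Fin k, (Fin (d - e i) → Fin n) → K),
            f = ∑ i, α i n (q i) (r i)} := by
  congr 1
  ext k
  constructor
  · rintro ⟨g, h, hgh, rfl⟩
    choose e he_pos he_lt hg hh using hgh
    choose q hq using fun i => exists_tensorSym_eq_of_isHomogeneous (hg i)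
    choose r hr using fun i => exists_tensorSym_eq_of_isHomogeneous (hh i)
    refine ⟨e, fun i => ⟨he_pos i, he_lt i⟩, fun i => tensorSymMul _ _,
      fun i => isNaturalBilinear_tensorSymMul _ _, q, r, ?_⟩
    simp [tensorSymMul, hq, hr]
  · rintro ⟨e, he, α, hα, q, r, rfl⟩
    choose c hc using fun i => IsNaturalBilinear.exists_eq_smul_tensorSymMul (hα i)
    refine ⟨fun i => tensorSym _ n (c i • q i), fun i => tensorSym _ n (r i),
      fun i => ⟨e i, (he i).1, (he i).2, isHomogeneous_tensorSym _, isHomogeneous_tensorSym _⟩, ?_⟩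
    simp [hc, tensorSymMul]

/-- For a homogeneous polynomial `f` of degree `d ≥ 2`, the strength defined via products of
lower-degree homogeneous polynomials equals the strength defined via bilinear polynomial
transformations `Q ⊕ R → S^d` from pairs of polynomial functors of positive degrees summing
to `d` (encoded via the tensor powers `T^e`, in which all irreducible polynomial functors of
degree `e` embed): the two corresponding sets of admissible numbers of summands have the
same minimum. -/
theorem stmt9 (K : Type*) [Field K] [IsAlgClosed K] [CharZero K]
    (d : ℕ) (hd : 2 ≤ d) (n : ℕ) (f : MvPolynomial (Fin n) K) (hf : f.IsHomogeneous d) :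
    sInf {k : ℕ | ∃ g h : Fin k → MvPolynomial (Fin n) K,
        (∀ i, ∃ e : ℕ, 0 < e ∧ e < d ∧ (g i).IsHomogeneous e ∧ (h i).IsHomogeneous (d - e)) ∧
        f = ∑ i, g i * h i}
    = sInf {k : ℕ | ∃ e : Fin k → ℕ, (∀ i, 0 < e i ∧ e i < d) ∧
        ∃ α : ∀ (i : Fin k) (m : ℕ), ((Fin (e i) → Fin m) → K) →ₗ[K]
            ((Fin (d - e i) → Fin m) → K) →ₗ[K] MvPolynomial (Fin m) K,
          (∀ (i : Fin k) (m m' : ℕ) (C : Matrix (Fin m') (Fin m) K)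
              (q : (Fin (e i) → Fin m) → K) (r : (Fin (d - e i) → Fin m) → K),
            substMap C (α i m q r) = α i m' (tensorMap C q) (tensorMap C r)) ∧
          ∃ (q : ∀ i : Fin k, (Fin (e i) → Fin n) → K)
            (r : ∀ i : Fin k, (Fin (d - e i) → Fin n) → K),
            f = ∑ i, α i n (q i) (r i)} :=
  stmt9_general K d n f
end

section
/- Let K be an infinite field and let q = x₁x₂ + x₃x₄ + x₅x₆ + ⋯ be the infinite quadric in S²_∞. For every infinite quadric p = Σ_{i≤j} a_{ij} xᵢxⱼ ∈ S²_∞, there exists an element e of the substitution monoid E (rows with finitely many nonzero entries) such that S²(e)q = p. In particular, all infinite-rank quadrics form a single equivalence class under mutual specialisation. -/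
open MvPolynomial

/-- The inverse limit `S^d_∞ = lim← S^d(Kⁿ)`: compatible sequences of homogeneous degree-`d`
polynomials, where the map `S^d(K^{n+1}) → S^d(Kⁿ)` sets the last variable to `0`. -/
def PSeq (K : Type*) [CommSemiring K] (d : ℕ) : Type _ :=
  {p : ∀ n : ℕ, MvPolynomial (Fin n) K //
    (∀ n, (p n).IsHomogeneous d) ∧
    ∀ n, aeval (fun i : Fin (n + 1) =>
        if h : i.1 < n then (X ⟨i.1, h⟩ : MvPolynomial (Fin n) K) else 0) (p (n + 1)) = p n}

/-- A matrix `e : ℕ × ℕ → K` is row-finite when each row has finitely many nonzero entries;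
these matrices form the monoid `E` acting by substitutions `x_j ↦ Σ_i e i j • x_i`. -/
def RowFinite {K : Type*} [Zero K] (e : ℕ → ℕ → K) : Prop :=
  ∀ i, (Function.support (e i)).Finite

/-- `SpecTo q p` means that `q` specialises to `p`, i.e. `p = P(e) q` for some element `e` of
the monoid `E` of row-finite substitution matrices: at each finite level `n`, `p` is obtained
from a sufficiently deep truncation of `q` by the substitution given by the corresponding
upper-left block of `e` (all the remaining entries of the first `n` rows vanishing). -/
def SpecTo {K : Type*} [CommSemiring K] {d : ℕ} (q p : PSeq K d) : Prop :=
  ∃ e : ℕ → ℕ → K, RowFinite e ∧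
    ∀ n : ℕ, ∃ N : ℕ,
      (∀ i j : ℕ, i < n → N ≤ j → e i j = 0) ∧
      aeval (fun j : Fin N => ∑ i : Fin n, e i.1 j.1 • (X i : MvPolynomial (Fin n) K))
        (q.1 N) = p.1 n

/-! Cut off at level `n`, `p` is the quadratic form `∑ₘ xₘ ℓₘ` with `ℓₘ = ∑_{i ≥ m} aₘᵢ xᵢ`,
so substituting `x_{2m} ↦ xₘ`, `x_{2m+1} ↦ ℓₘ` into `q = ∑ₘ x_{2m} x_{2m+1}` yields `p`. The
coefficients `aₘᵢ` do not depend on the level, since truncation is `killCompl` along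
`Fin.castSucc`, and as `aₘᵢ = 0` for `i < m`, row `i` of this substitution vanishes beyond
column `2i + 1`. -/

theorem MvPolynomial.killCompl_castSucc_eq_aeval (R : Type*) [CommSemiring R] (n : ℕ) :
    killCompl (R := R) (Fin.castSucc_injective n) = aeval (fun i : Fin (n + 1) =>
        if h : i.1 < n then (X ⟨i.1, h⟩ : MvPolynomial (Fin n) R) else 0) := by
  classical
  rw [killCompl]
  congr 1
  funext i
  by_cases h : i.1 < n
  · rw [dif_pos h, dif_pos (by simpa using h)]
    congr 1
    ext
    simp
  · rw [dif_neg h, dif_neg (by simpa using h)]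

namespace PSeq

variable {K : Type*} [CommSemiring K] {d : ℕ}

theorem coeff_mapDomain_castSucc (p : PSeq K d) (n : ℕ) (u : Fin n →₀ ℕ) :
    coeff (u.mapDomain Fin.castSucc) (p.1 (n + 1)) = coeff u (p.1 n) := by
  rw [← p.2.2 n, ← killCompl_castSucc_eq_aeval, coeff_killCompl]

theorem coeff_mapDomain_castLE (p : PSeq K d) {n n' : ℕ} (h : n ≤ n') (u : Fin n →₀ ℕ) :
    coeff (u.mapDomain (Fin.castLE h)) (p.1 n') = coeff u (p.1 n) := by
  induction n', h using Nat.le_induction with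
  | base => simp
  | succ n' h ih =>
    rw [← ih, ← coeff_mapDomain_castSucc p n', ← Finsupp.mapDomain_comp]
    rfl

end PSeq

namespace Finsupp

theorem exists_le_eq_single_add_single_of_degree_eq_two {σ : Type*} [LinearOrder σ]
    {d : σ →₀ ℕ} (h : d.degree = 2) : ∃ a b, a ≤ b ∧ d = single a 1 + single b 1 := by
  have hcard : Multiset.card (toMultiset d) = 2 := by rw [card_toMultiset]; exact h
  obtain ⟨a, b, hab⟩ := Multiset.card_eq_two.1 hcard
  have hd : d = single a 1 + single b 1 := by
    rw [← toMultiset_toFinsupp d, hab, Multiset.insert_eq_cons, ← Multiset.singleton_add,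
      Multiset.toFinsupp_add, Multiset.toFinsupp_singleton, Multiset.toFinsupp_singleton]
  rcases le_total a b with hab | hba
  · exact ⟨a, b, hab, hd⟩
  · exact ⟨b, a, hba, hd.trans (add_comm _ _)⟩

theorem single_add_single_eq_iff_of_le {σ : Type*} [PartialOrder σ] {a b c e : σ}
    (hab : a ≤ b) (hce : c ≤ e) :
    single a 1 + single b 1 = single c 1 + single e 1 ↔ a = c ∧ b = e := by
  rw [single_add_single_eq_single_add_single one_ne_zero one_ne_zero]
  constructor
  · rintro (h | ⟨-, rfl, rfl⟩ | ⟨h, -⟩)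
    · exact h
    · exact ⟨le_antisymm hab hce, le_antisymm hce hab⟩
    · exact absurd h (by norm_num)
  · exact Or.inl

end Finsupp

open Finsupp in
theorem MvPolynomial.IsHomogeneous.eq_sum_X_mul_sum_smul_X {R σ : Type*} [CommSemiring R]
    [Fintype σ] [LinearOrder σ] {P : MvPolynomial σ R} (hP : P.IsHomogeneous 2) :
    P = ∑ m, X m * ∑ i, (if m ≤ i then coeff (single m 1 + single i 1) P else 0) • X i := by
  ext d
  simp only [coeff_sum, Finset.mul_sum, X, monomial_mul, one_mul, smul_monomial,
    coeff_monomial, smul_eq_mul, mul_one]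
  by_cases hd : d.degree = 2
  · obtain ⟨a, b, hab, rfl⟩ := exists_le_eq_single_add_single_of_degree_eq_two hd
    have hsummand : ∀ m i, (if single m 1 + single i 1 = single a 1 + single b 1 then
          (if m ≤ i then coeff (single m 1 + single i 1) P else 0) else 0) =
        if m = a ∧ i = b then coeff (single a 1 + single b 1) P else 0 := by
      intro m i
      by_cases hmi : m ≤ i
      · simp only [single_add_single_eq_iff_of_le hmi hab, if_pos hmi]
        split_ifs with h
        · rw [h.1, h.2]
        · rfl
      · have : ¬ (m = a ∧ i = b) := fun ⟨h1, h2⟩ => hmi (h1 ▸ h2 ▸ hab)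
        simp [hmi, this]
    simp only [hsummand, ite_and, Finset.sum_ite_irrel, Finset.sum_ite_eq', Finset.mem_univ,
      if_true, Finset.sum_const_zero]
  · rw [hP.coeff_eq_zero hd]
    refine (Finset.sum_eq_zero fun m _ => Finset.sum_eq_zero fun i _ => if_neg ?_).symm
    rintro rfl
    exact hd (by simp only [map_add, degree_single])

theorem Finset.sum_range_two_mul {M : Type*} [AddCommMonoid M] (n : ℕ) (f : ℕ → M) :
    ∑ k ∈ range (2 * n), f k = ∑ m ∈ range n, (f (2 * m) + f (2 * m + 1)) := by
  induction n with
  | zero => simp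
  | succ n ih =>
    rw [Nat.mul_succ, sum_range_succ, sum_range_succ, sum_range_succ, ih, add_assoc]

theorem MvPolynomial.aeval_sum_X_mul_X_pairs {R S : Type*} [CommSemiring R] [CommSemiring S]
    [Algebra R S] (n : ℕ) (g : ℕ → S) :
    aeval (fun j : Fin (2 * n) => g j) (∑ i : Fin (2 * n), ∑ j : Fin (2 * n),
        if i.1 % 2 = 0 ∧ j.1 = i.1 + 1 then X i * X j else (0 : MvPolynomial _ R)) =
      ∑ m : Fin n, g (2 * m) * g (2 * m + 1) := by
  simp only [map_sum, apply_ite (aeval _), map_mul, aeval_X, map_zero]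
  rw [Fin.sum_univ_eq_sum_range (fun i => ∑ j : Fin (2 * n),
      if i % 2 = 0 ∧ j.1 = i + 1 then g i * g j else 0), Finset.sum_range_two_mul,
    ← Fin.sum_univ_eq_sum_range]
  refine Finset.sum_congr rfl fun m _ => ?_
  have hm : 2 * m.1 + 1 < 2 * n := by omega
  rw [Fin.sum_univ_eq_sum_range (fun j => if 2 * m.1 % 2 = 0 ∧ j = 2 * m.1 + 1 then
      g (2 * m) * g j else 0)]
  simp only [Nat.mul_mod_right, Nat.mul_add_mod_self_left, true_and, false_and, Nat.mod_succ,
    one_ne_zero, if_false, Finset.sum_ite_eq', Finset.mem_range, hm, if_true, Finset.sum_const_zero,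
    add_zero]

section PairingMatrix

variable {K : Type*}

/-- The substitution `x_{2m} ↦ x_m`, `x_{2m+1} ↦ ∑ i, A m i • x_i`. -/
def pairingMatrix [Zero K] [One K] (A : ℕ → ℕ → K) (i k : ℕ) : K :=
  if k % 2 = 0 then (if i = k / 2 then 1 else 0) else A (k / 2) i

theorem pairingMatrix_eq_zero [Zero K] [One K] {A : ℕ → ℕ → K}
    (hA : ∀ m i, i < m → A m i = 0) {i k : ℕ} (hk : 2 * i + 2 ≤ k) :
    pairingMatrix A i k = 0 := by
  unfold pairingMatrix
  split_ifs
  · omega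
  · rfl
  · exact hA _ _ (by omega)

theorem rowFinite_pairingMatrix [Zero K] [One K] {A : ℕ → ℕ → K}
    (hA : ∀ m i, i < m → A m i = 0) :
    RowFinite (pairingMatrix A) := fun i =>
  (Set.finite_Iio (2 * i + 2)).subset fun k hk => by
    by_contra hki
    exact hk (pairingMatrix_eq_zero hA (not_lt.1 hki))

theorem sum_pairingMatrix_two_mul_smul_X [CommSemiring K] (A : ℕ → ℕ → K) {n : ℕ}
    (m : Fin n) :
    ∑ i : Fin n, pairingMatrix A i (2 * m) • (X i : MvPolynomial (Fin n) K) = X m := by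
  rw [Fintype.sum_eq_single m fun i hi => ?_]
  · simp [pairingMatrix]
  · rw [pairingMatrix, if_pos (by omega), if_neg (by omega), zero_smul]

theorem sum_pairingMatrix_two_mul_add_one_smul_X [CommSemiring K] (A : ℕ → ℕ → K) {n : ℕ}
    (m : Fin n) :
    ∑ i : Fin n, pairingMatrix A i (2 * m + 1) • (X i : MvPolynomial (Fin n) K) =
      ∑ i : Fin n, A m i • X i := by
  simp only [pairingMatrix, if_neg (by omega : (2 * m.1 + 1) % 2 ≠ 0),
    show (2 * m.1 + 1) / 2 = m by omega]

end PairingMatrix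

namespace PSeq

variable {K : Type*} [CommSemiring K]

noncomputable def quadCoeff (p : PSeq K 2) (m i : ℕ) : K :=
  if h : m ≤ i then
    coeff (Finsupp.single (⟨m, by omega⟩ : Fin (i + 1)) 1 + Finsupp.single ⟨i, by omega⟩ 1)
      (p.1 (i + 1))
  else 0

theorem quadCoeff_eq_zero_of_lt (p : PSeq K 2) {m i : ℕ} (h : i < m) : p.quadCoeff m i = 0 :=
  dif_neg (by omega)

theorem quadCoeff_eq (p : PSeq K 2) {n : ℕ} (m i : Fin n) :
    p.quadCoeff m i =
      if m ≤ i then coeff (Finsupp.single m 1 + Finsupp.single i 1) (p.1 n) else 0 := by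
  by_cases h : m ≤ i
  · rw [quadCoeff, dif_pos (Fin.le_iff_val_le_val.1 h), if_pos h,
      ← p.coeff_mapDomain_castLE (show i.1 + 1 ≤ n by omega), Finsupp.mapDomain_add,
      Finsupp.mapDomain_single, Finsupp.mapDomain_single]
    rfl
  · rw [quadCoeff, dif_neg (mt Fin.le_iff_val_le_val.2 h), if_neg h]

end PSeq

theorem stmt14_general (K : Type*) [Field K] (q : PSeq K 2)
    (hq : ∀ n, q.1 n = ∑ i : Fin n, ∑ j : Fin n,
        if i.1 % 2 = 0 ∧ j.1 = i.1 + 1 then X i * X j else 0) :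
    ∀ p : PSeq K 2, SpecTo q p := by
  intro p
  have hA : ∀ m i, i < m → p.quadCoeff m i = 0 := fun _ _ => p.quadCoeff_eq_zero_of_lt
  refine ⟨pairingMatrix p.quadCoeff, rowFinite_pairingMatrix hA, fun n =>
    ⟨2 * n, fun i j hi hj => pairingMatrix_eq_zero hA (by omega), ?_⟩⟩
  rw [hq, aeval_sum_X_mul_X_pairs n
    (fun k => ∑ i : Fin n, pairingMatrix p.quadCoeff i k • (X i : MvPolynomial (Fin n) K))]
  conv_rhs => rw [(p.2.1 n).eq_sum_X_mul_sum_smul_X]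
  refine Finset.sum_congr rfl fun m _ => ?_
  rw [sum_pairingMatrix_two_mul_smul_X, sum_pairingMatrix_two_mul_add_one_smul_X]
  simp only [p.quadCoeff_eq]

/-- The infinite quadric `q = x₀x₁ + x₂x₃ + ⋯` specialises, via the row-finite substitution
monoid `E`, to every infinite quadric `p ∈ S²_∞`. -/
theorem stmt14 (K : Type*) [Field K] [Infinite K] (q : PSeq K 2)
    (hq : ∀ n, q.1 n = ∑ i : Fin n, ∑ j : Fin n,
        if i.1 % 2 = 0 ∧ j.1 = i.1 + 1 then X i * X j else 0) :
    ∀ p : PSeq K 2, SpecTo q p :=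
  stmt14_general K q hq
end

section
/- Let K be a field of characteristic 0 and let p = x₁(x₁² + x₂² + x₃² + ⋯) and q = x₁³ + x₂³ + ⋯ in S³_∞. Then p is not a specialisation of q: there is no element e of the row-finite substitution monoid E with S³(e)q = p. -/
open MvPolynomial

/-! Suppose `S³(e) q = p`. At level `n`, evaluating both sides at `v ∈ Kⁿ` gives
`∑ⱼ ℓⱼ(v)³ = v₀ (v₀² + ⋯ + v_{n-1}²)` with `ℓⱼ(v) = ∑ᵢ e i j vᵢ`. Polarizing at the basis vectors
`δ₀, δ_b, δ_c` with `b, c ≥ 1` yields `∑ⱼ 3 e 0 j · e b j · e c j = [b = c]`: the identity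
matrix of size `n - 1` factors through the diagonal matrix with entries `e 0 j`. Hence `n - 1` is
at most the number of nonzero entries in row `0` of `e`, which is finite by row-finiteness. -/

open Matrix

theorem Matrix.card_le_ncard_support_of_mul_diagonal_mul_eq_one {K m n : Type*} [Field K]
    [Fintype m] [DecidableEq m] [Fintype n] [DecidableEq n] {A : Matrix m n K} {d : n → K}
    {B : Matrix n m K} (h : A * diagonal d * B = 1) :
    Fintype.card m ≤ (Function.support d).ncard := by
  classical
  calc Fintype.card m = (1 : Matrix m m K).rank := rank_one.symm
    _ = (A * diagonal d * B).rank := by rw [h]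
    _ ≤ (A * diagonal d).rank := rank_mul_le_left _ _
    _ ≤ (diagonal d).rank := rank_mul_le_right _ _
    _ = (Function.support d).ncard := by
      rw [rank_diagonal, ← Nat.card_eq_fintype_card, ← Nat.card_coe_set_eq]; rfl

def cubicPolar {V R : Type*} [Add V] [AddCommGroup R] (F : V → R) (x y z : V) : R :=
  F (x + y + z) - F (x + y) - F (x + z) - F (y + z) + F x + F y + F z

theorem cubicPolar_sum_vecMul_pow_three {R m n : Type*} [CommRing R] [Fintype m] [Fintype n]
    (E : Matrix m n R) (x y z : m → R) :
    cubicPolar (fun v => ∑ j, (v ᵥ* E) j ^ 3) x y z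
      = 6 * ∑ j, (x ᵥ* E) j * (y ᵥ* E) j * (z ᵥ* E) j := by
  simp only [cubicPolar, add_vecMul, Pi.add_apply, Finset.mul_sum, ← Finset.sum_add_distrib,
    ← Finset.sum_sub_distrib]
  exact Finset.sum_congr rfl fun j _ => by ring

theorem cubicPolar_mul_dotProduct_self {R n : Type*} [CommRing R] [Fintype n] (i : n)
    (x y z : n → R) :
    cubicPolar (fun v => v i * (v ⬝ᵥ v)) x y z
      = 2 * (x i * (y ⬝ᵥ z) + y i * (x ⬝ᵥ z) + z i * (x ⬝ᵥ y)) := by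
  simp only [cubicPolar, Pi.add_apply, add_dotProduct, dotProduct_add, dotProduct_comm y x,
    dotProduct_comm z x, dotProduct_comm z y]
  ring

section SumOfCubes

variable {K ι : Type*} [Field K] [Fintype ι] {m : ℕ} {E : Matrix (Fin (m + 1)) ι K}

theorem three_mul_sum_mul_mul_eq_of_sum_cube_vecMul_eq [CharZero K]
    (hE : ∀ v, ∑ j, (v ᵥ* E) j ^ 3 = v 0 * (v ⬝ᵥ v)) (b c : Fin m) :
    3 * ∑ j, E 0 j * E b.succ j * E c.succ j = if b = c then 1 else 0 := by
  have h := cubicPolar_sum_vecMul_pow_three E (Pi.single 0 1) (Pi.single b.succ 1)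
    (Pi.single c.succ 1)
  rw [show (fun v => ∑ j, (v ᵥ* E) j ^ 3) = fun v => v 0 * (v ⬝ᵥ v) from funext hE,
    cubicPolar_mul_dotProduct_self] at h
  simp only [single_one_vecMul, row, dotProduct_single_one, Pi.single_apply, Fin.succ_inj,
    Fin.succ_ne_zero, @eq_comm _ c b, if_true, if_false] at h
  linear_combination -h / 2

theorem le_ncard_support_of_sum_cube_vecMul_eq [CharZero K] [DecidableEq ι]
    (hE : ∀ v, ∑ j, (v ᵥ* E) j ^ 3 = v 0 * (v ⬝ᵥ v)) :
    m ≤ (Function.support (E 0)).ncard := by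
  have hfactor : (of fun (b : Fin m) j => 3 * E b.succ j) * diagonal (E 0)
      * of (fun j (c : Fin m) => E c.succ j) = 1 := by
    ext b c
    rw [mul_apply]
    simp only [mul_diagonal, of_apply, one_apply,
      ← three_mul_sum_mul_mul_eq_of_sum_cube_vecMul_eq hE b c, Finset.mul_sum]
    exact Finset.sum_congr rfl fun j _ => by ring
  simpa using card_le_ncard_support_of_mul_diagonal_mul_eq_one hfactor

end SumOfCubes

/-- The cubic `p = x₀(x₀² + x₁² + x₂² + ⋯)` is not a specialisation of
`q = x₀³ + x₁³ + ⋯`: there is no row-finite substitution matrix `e` with `S³(e) q = p`. -/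
theorem stmt16 (K : Type*) [Field K] [CharZero K] (p q : PSeq K 3)
    (hp : ∀ n, p.1 n =
        (∑ i : Fin n, if i.1 = 0 then X i else 0) * (∑ i : Fin n, X i ^ 2))
    (hq : ∀ n, q.1 n = ∑ i : Fin n, X i ^ 3) :
    ¬ SpecTo q p := by
  rintro ⟨e, he, hspec⟩
  set M := (Function.support (e 0)).ncard
  obtain ⟨N, -, hev⟩ := hspec (M + 2)
  let E : Matrix (Fin (M + 2)) (Fin N) K := of fun i j => e i j
  have hE : ∀ v, ∑ j, (v ᵥ* E) j ^ 3 = v 0 * (v ⬝ᵥ v) := by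
    intro v
    have hev_v := congrArg (eval v) hev
    simp only [hp, hq, map_sum, map_pow, map_mul, aeval_X, eval_X, apply_ite, map_zero] at hev_v
    simpa [vecMul, dotProduct, E, sq, mul_comm] using hev_v
  have hsupp : (Function.support (E 0)).ncard ≤ M :=
    Set.ncard_le_ncard_of_injOn Fin.val (fun _ hj => hj) Fin.val_injective.injOn (he 0)
  have := le_ncard_support_of_sum_cube_vecMul_eq hE
  omega
end

section
/- Let K be a field of characteristic 0 and define in S³_∞: p = x₁(x₁²+x₂²+⋯), q = x₁³+x₂³+⋯, and r = p(x₁,x₃,x₅,…) + q(x₂,x₄,x₆,…). Then q ⪯ r and r ⋠ q, where ⪯ is specialisation via the row-finite substitution monoid E. In particular, q and r are not equivalent under mutual specialisation even though both have dense GL_∞-orbits. -/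
open MvPolynomial

private theorem part1 (K : Type*) [Field K] [CharZero K] (q r : PSeq K 3)
    (hq : ∀ n, q.1 n = ∑ i : Fin n, X i ^ 3)
    (hr : ∀ n, r.1 n =
        (∑ i : Fin n, if i.1 = 0 then X i else 0) *
            (∑ i : Fin n, if i.1 % 2 = 0 then X i ^ 2 else 0)
          + ∑ i : Fin n, if i.1 % 2 = 1 then X i ^ 3 else 0) :
    SpecTo r q := by
  refine ⟨fun i j => if j = 2 * i + 1 then 1 else 0, ?_, ?_⟩
  · intro i
    apply Set.Finite.subset (Set.finite_singleton (2 * i + 1))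
    intro j hj
    simp only [Function.mem_support, ne_eq, ite_eq_right_iff, not_forall] at hj
    simp [hj.1]
  · intro n
    refine ⟨2 * n, fun i j hi hj => by simp only [ite_eq_right_iff]; omega, ?_⟩
    rw [hq n, hr (2 * n)]
    set f : Fin (2 * n) → MvPolynomial (Fin n) K :=
      fun j => ∑ i : Fin n, (if (j : ℕ) = 2 * i + 1 then (1:K) else 0) • X i with hfdef
    have hf : ∀ j : Fin (2 * n), (j : ℕ) % 2 = 1 →
        f j = X (⟨(j : ℕ) / 2, by omega⟩ : Fin n) := by
      intro j hj
      rw [hfdef]; dsimp only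
      rw [Finset.sum_eq_single (⟨(j : ℕ) / 2, by omega⟩ : Fin n)]
      · rw [if_pos (by simp; omega), one_smul]
      · intro i _ hi
        rw [if_neg, zero_smul]
        intro h
        apply hi
        apply Fin.ext
        simp
        omega
      · simp
    have hf0 : ∀ j : Fin (2 * n), (j : ℕ) % 2 = 0 → f j = 0 := by
      intro j hj
      rw [hfdef]; dsimp only
      apply Finset.sum_eq_zero
      intro i _
      have h2 : ¬((j:ℕ) = 2 * (i:ℕ) + 1) := by omega
      rw [if_neg h2, zero_smul]
    simp only [map_add, map_mul, map_sum]
    have h1 : (∑ i : Fin (2 * n), (aeval f) (if (i : ℕ) = 0 then (X i : MvPolynomial (Fin (2*n)) K) else 0)) = 0 := by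
      apply Finset.sum_eq_zero
      intro i _
      split_ifs with h
      · rw [aeval_X]
        exact hf0 i (by omega)
      · exact map_zero _
    rw [h1, zero_mul, zero_add]
    have h2 : ∀ i : Fin (2 * n), (aeval f) (if (i : ℕ) % 2 = 1 then (X i : MvPolynomial (Fin (2*n)) K) ^ 3 else 0)
        = if (i : ℕ) % 2 = 1 then X (⟨(i : ℕ) / 2, by omega⟩ : Fin n) ^ 3 else 0 := by
      intro i
      split_ifs with h
      · rw [map_pow, aeval_X, hf i h]
      · exact map_zero _
    rw [Finset.sum_congr rfl (fun i _ => h2 i)]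
    rw [← Finset.sum_filter]
    apply Finset.sum_nbij' (fun i' : Fin (2 * n) => (⟨(i' : ℕ) / 2, by omega⟩ : Fin n))
      (fun i : Fin n => (⟨2 * (i : ℕ) + 1, by omega⟩ : Fin (2 * n)))
    · simp
    · intro i _
      simp only [Finset.mem_filter, Finset.mem_univ, true_and]
      omega
    · intro a ha
      simp only [Finset.mem_filter] at ha
      apply Fin.ext
      simp
      omega
    · intro a _
      apply Fin.ext
      simp
      omega
    · intro a _
      rfl

private theorem part2 (K : Type*) [Field K] [CharZero K] (q r : PSeq K 3)
    (hq : ∀ n, q.1 n = ∑ i : Fin n, X i ^ 3)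
    (hr : ∀ n, r.1 n =
        (∑ i : Fin n, if i.1 = 0 then X i else 0) *
            (∑ i : Fin n, if i.1 % 2 = 0 then X i ^ 2 else 0)
          + ∑ i : Fin n, if i.1 % 2 = 1 then X i ^ 3 else 0) :
    ¬ SpecTo q r := by
  rintro ⟨e, hrow, hspec⟩
  obtain ⟨M₀, hM₀⟩ : ∃ M : ℕ, ∀ j, M ≤ j → e 0 j = 0 := by
    refine ⟨(hrow 0).toFinset.sup id + 1, fun j hj => ?_⟩
    by_contra h
    have hmem : j ∈ (hrow 0).toFinset := (Set.Finite.mem_toFinset _).mpr h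
    have := Finset.le_sup (f := id) hmem
    simp only [id] at this
    omega
  set n := 2 * M₀ + 4 with hn
  obtain ⟨N, hvan, heq⟩ := hspec n
  rw [hq, hr] at heq
  set f : Fin N → MvPolynomial (Fin n) K :=
    fun j => ∑ i : Fin n, e i.1 j.1 • X i with hfdef
  have hL0 : (aeval f) (∑ j : Fin N, (X j : MvPolynomial (Fin N) K) ^ 3)
      = ∑ j : Fin N, (f j) ^ 3 := by
    rw [map_sum]
    exact Finset.sum_congr rfl fun j _ => by rw [map_pow, aeval_X]
  rw [hL0] at heq
  have hfd : ∀ (u : Fin n) (j : Fin N), pderiv u (f j) = C (e u.1 j.1) := by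
    intro u j
    rw [hfdef]
    dsimp only
    simp only [smul_eq_C_mul]
    rw [map_sum, Finset.sum_eq_single u]
    · rw [pderiv_C_mul, pderiv_X_self, mul_one]
    · intro i _ hi
      rw [pderiv_C_mul, pderiv_X_of_ne hi, mul_zero]
    · simp
  have hd3 : ∀ (u v w : Fin n) (j : Fin N),
      pderiv w (pderiv v (pderiv u ((f j) ^ 3)))
        = C (6 * (e u.1 j.1 * e v.1 j.1 * e w.1 j.1)) := by
    intro u v w j
    have h3 : (f j) ^ 3 = f j * f j * f j := by ring
    rw [h3]
    simp only [pderiv_mul, map_add, hfd, pderiv_C, mul_zero, zero_mul, add_zero, zero_add,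
      mul_one, one_mul]
    simp only [← C_mul, ← C_add]
    rw [C_inj]
    ring
  have hLd : ∀ u v w : Fin n,
      pderiv w (pderiv v (pderiv u (∑ j : Fin N, (f j) ^ 3)))
        = C (6 * ∑ j : Fin N, e u.1 j.1 * e v.1 j.1 * e w.1 j.1) := by
    intro u v w
    rw [map_sum, map_sum, map_sum, Finset.sum_congr rfl fun j _ => hd3 u v w j,
      ← map_sum C, Finset.mul_sum]
  have hz : (0 : ℕ) < n := by omega
  set z : Fin n := ⟨0, hz⟩ with hzdef
  have hidx : ∀ a : Fin (M₀ + 1), 2 * a.1 + 2 < n := fun a => by omega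
  set idx : Fin (M₀ + 1) → Fin n := fun a => ⟨2 * a.1 + 2, hidx a⟩ with hidxdef
  have hzidx : ∀ a : Fin (M₀ + 1), z ≠ idx a := by
    intro a hcontra
    have := congrArg Fin.val hcontra
    simp only [hzdef, hidxdef] at this
    omega
  have hidxinj : ∀ a b : Fin (M₀ + 1), a ≠ b → idx a ≠ idx b := by
    intro a b hab hcontra
    have := congrArg Fin.val hcontra
    simp only [hidxdef] at this
    exact hab (Fin.ext (by omega))
  have hidxpar : ∀ a : Fin (M₀ + 1), (idx a).1 % 2 = 0 := by
    intro a
    simp only [hidxdef]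
    omega
  have hA : (∑ i : Fin n, if i.1 = 0 then (X i : MvPolynomial (Fin n) K) else 0) = X z := by
    rw [Finset.sum_eq_single z]
    · rw [if_pos rfl]
    · intro i _ hi
      rw [if_neg]
      intro h
      exact hi (Fin.ext h)
    · simp
  rw [hA] at heq
  have hB : ∀ u : Fin n, u.1 % 2 = 0 →
      pderiv u (∑ i : Fin n, if i.1 % 2 = 0 then (X i : MvPolynomial (Fin n) K) ^ 2 else 0)
        = C 2 * X u := by
    intro u hu
    rw [map_sum, Finset.sum_eq_single u]
    · rw [if_pos hu, pderiv_pow, pderiv_X_self, pow_one, mul_one]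
      rw [show ((2:K)) = ((2:ℕ):K) by norm_num, C_eq_coe_nat]
    · intro i _ hi
      split_ifs
      · rw [pderiv_pow, pderiv_X_of_ne hi, mul_zero]
      · exact map_zero _
    · simp
  have hC3 : ∀ u : Fin n, u.1 % 2 = 0 →
      pderiv u (∑ i : Fin n, if i.1 % 2 = 1 then (X i : MvPolynomial (Fin n) K) ^ 3 else 0)
        = 0 := by
    intro u hu
    rw [map_sum]
    apply Finset.sum_eq_zero
    intro i _
    split_ifs with h
    · rw [pderiv_pow, pderiv_X_of_ne, mul_zero]
      intro hiu
      rw [hiu] at h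
      omega
    · exact map_zero _
  have key : ∀ a b : Fin (M₀ + 1),
      6 * (∑ j : Fin N, e (idx a).1 j.1 * e (idx b).1 j.1 * e 0 j.1)
        = if a = b then (2 : K) else 0 := by
    intro a b
    have h := congrArg (pderiv z) (congrArg (pderiv (idx b)) (congrArg (pderiv (idx a)) heq))
    rw [hLd] at h
    have hR1 : pderiv (idx a)
        ((X z : MvPolynomial (Fin n) K) *
            (∑ i : Fin n, if i.1 % 2 = 0 then X i ^ 2 else 0)
          + ∑ i : Fin n, if i.1 % 2 = 1 then X i ^ 3 else 0)
        = X z * (C 2 * X (idx a)) := by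
      rw [map_add, hC3 _ (hidxpar a), add_zero, pderiv_mul, pderiv_X_of_ne (hzidx a),
        zero_mul, zero_add, hB _ (hidxpar a)]
    rw [hR1] at h
    by_cases hab : a = b
    · subst hab
      rw [pderiv_mul, pderiv_X_of_ne (hzidx a), zero_mul, zero_add, pderiv_C_mul,
        pderiv_X_self, mul_one, pderiv_mul, pderiv_X_self, one_mul, pderiv_C,
        mul_zero, add_zero] at h
      rw [if_pos rfl]
      have hzv : (0 : ℕ) = z.1 := rfl
      rw [show e 0 = e z.1 from rfl] at h ⊢
      exact C_injective _ _ h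
    · rw [pderiv_mul, pderiv_X_of_ne (hzidx b), zero_mul, zero_add, pderiv_C_mul,
        pderiv_X_of_ne (hidxinj a b hab), mul_zero, mul_zero,
        map_zero] at h
      rw [if_neg hab]
      rw [show e 0 = e z.1 from rfl] at h ⊢
      rw [show (0 : MvPolynomial (Fin n) K) = C 0 from (map_zero C).symm] at h
      exact C_injective _ _ h
  -- truncate the sums to Fin M₀
  have trunc : ∀ a b : Fin (M₀ + 1),
      (∑ j : Fin N, e (idx a).1 j.1 * e (idx b).1 j.1 * e 0 j.1)
        = ∑ j : Fin M₀, e (idx a).1 j.1 * e (idx b).1 j.1 * e 0 j.1 := by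
    intro a b
    have hgz : ∀ j : ℕ, N ≤ j ∨ M₀ ≤ j →
        e (idx a).1 j * e (idx b).1 j * e 0 j = 0 := by
      intro j hj
      rcases hj with hj | hj
      · rw [hvan 0 j (by omega) hj, mul_zero]
      · rw [hM₀ j hj, mul_zero]
    rw [Fin.sum_univ_eq_sum_range (fun j => e (idx a).1 j * e (idx b).1 j * e 0 j),
      Fin.sum_univ_eq_sum_range (fun j => e (idx a).1 j * e (idx b).1 j * e 0 j)]
    rw [Finset.sum_subset (Finset.range_subset_range.mpr (le_max_left N M₀))
        (fun j _ hj => hgz j (Or.inl (by simpa using hj))),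
      Finset.sum_subset (Finset.range_subset_range.mpr (le_max_right N M₀))
        (fun j _ hj => hgz j (Or.inr (by simpa using hj)))]
  -- matrix contradiction
  set W : Matrix (Fin (M₀ + 1)) (Fin M₀) K :=
    fun a j => 3 * (e (idx a).1 j.1 * e 0 j.1) with hW
  set U : Matrix (Fin M₀) (Fin (M₀ + 1)) K := fun j b => e (idx b).1 j.1 with hU
  have hWU : W * U = 1 := by
    ext a b
    rw [Matrix.mul_apply]
    have hk := key a b
    rw [trunc a b] at hk
    have hsum : ∑ j : Fin M₀, W a j * U j b
        = 3 * ∑ j : Fin M₀, e (idx a).1 j.1 * e (idx b).1 j.1 * e 0 j.1 := by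
      rw [Finset.mul_sum]
      apply Finset.sum_congr rfl
      intro j _
      rw [hW, hU]
      ring
    rw [hsum, Matrix.one_apply]
    by_cases hab : a = b
    · rw [if_pos hab]
      rw [if_pos hab] at hk
      linear_combination hk / 2
    · rw [if_neg hab]
      rw [if_neg hab] at hk
      linear_combination hk / 2
  have h1 : ((1 : Matrix (Fin (M₀ + 1)) (Fin (M₀ + 1)) K)).rank = M₀ + 1 := by
    rw [Matrix.rank_one, Fintype.card_fin]
  have h2 : (W * U).rank ≤ M₀ := by
    refine le_trans (Matrix.rank_mul_le_right W U) ?_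
    refine le_trans (Matrix.rank_le_card_height U) ?_
    simp
  rw [hWU, h1] at h2
  omega

/-- For `q = x₁³ + x₂³ + ⋯` and `r = p(x₁, x₃, x₅, …) + q(x₂, x₄, …)` (in 0-indexed
variables: `r = x₀(x₀² + x₂² + ⋯) + (x₁³ + x₃³ + ⋯)`), where `p = x₁(x₁² + x₂² + ⋯)`:
we have `q ⪯ r` but `r ⋠ q`. In particular `q` and `r` are not equivalent under mutual
specialisation, even though both have dense `GL_∞`-orbits. -/
theorem stmt17 (K : Type*) [Field K] [CharZero K] (q r : PSeq K 3)
    (hq : ∀ n, q.1 n = ∑ i : Fin n, X i ^ 3)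
    (hr : ∀ n, r.1 n =
        (∑ i : Fin n, if i.1 = 0 then X i else 0) *
            (∑ i : Fin n, if i.1 % 2 = 0 then X i ^ 2 else 0)
          + ∑ i : Fin n, if i.1 % 2 = 1 then X i ^ 3 else 0) :
    SpecTo r q ∧ ¬ SpecTo q r := by
  exact ⟨part1 K q r hq hr, part2 K q r hq hr⟩
end
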